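/- The system response maps Φ_xx = (I - Z(A+BKC))^{-1}, Φ_xy = Φ_xx·Z·B·K, Φ_ux = K·C·Φ_xx, Φ_uy = K + K·C·Φ_xx·Z·B·K satisfy the affine constraints [I - Z·A, -Z·B]·Φ = [I, 0] and Φ·[[I - Z·A],[-C]] = [[I],[0]], where Φ is the 2×2 block matrix with blocks Φ_xx, Φ_xy, Φ_ux, Φ_uy. -/
import Mathlib


open Matrix MeasureTheory

/-- A matrix with `(T+1)×(T+1)` blocks is block lower triangular if every block
strictly above the block diagonal is zero. -/
def IsBLT {T a b : ℕ} (M : Matrix (Fin (T+1) × Fin a) (Fin (T+1) × Fin b) ℝ) : Prop :=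
  ∀ p q, p.1 < q.1 → M p q = 0

/-- Strictly block lower triangular: all blocks on and above the block diagonal vanish. -/
def IsStrictBLT {T a b : ℕ} (M : Matrix (Fin (T+1) × Fin a) (Fin (T+1) × Fin b) ℝ) : Prop :=
  ∀ p q, p.1 ≤ q.1 → M p q = 0

/-- Block diagonal: off-diagonal blocks vanish. -/
def IsBD {T a b : ℕ} (M : Matrix (Fin (T+1) × Fin a) (Fin (T+1) × Fin b) ℝ) : Prop :=
  ∀ p q, p.1 ≠ q.1 → M p q = 0

/-- `lead t ht M` is the leading principal block submatrix `M(:t)` consisting of the first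
`t+1` block rows and block columns of `M`. -/
def lead {T a b : ℕ} (t : ℕ) (ht : t + 1 ≤ T + 1)
    (M : Matrix (Fin (T+1) × Fin a) (Fin (T+1) × Fin b) ℝ) :
    Matrix (Fin (t+1) × Fin a) (Fin (t+1) × Fin b) ℝ :=
  M.submatrix (Prod.map (Fin.castLE ht) id) (Prod.map (Fin.castLE ht) id)

/-- The block downshift operator: `T` identity `n×n` blocks on the first block subdiagonal,
zeros elsewhere. -/
def dshift (n T : ℕ) : Matrix (Fin (T+1) × Fin n) (Fin (T+1) × Fin n) ℝ :=
  fun p q => if (p.1 : ℕ) = (q.1 : ℕ) + 1 ∧ p.2 = q.2 then 1 else 0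

lemma IsBD.isBLT {T a b : ℕ} {M : Matrix (Fin (T+1) × Fin a) (Fin (T+1) × Fin b) ℝ}
    (h : IsBD M) : IsBLT M := fun p q hpq => h p q (ne_of_lt hpq)

lemma IsBLT.mul {T a b c : ℕ} {M : Matrix (Fin (T+1) × Fin a) (Fin (T+1) × Fin b) ℝ}
    {N : Matrix (Fin (T+1) × Fin b) (Fin (T+1) × Fin c) ℝ}
    (hM : IsBLT M) (hN : IsBLT N) : IsBLT (M * N) := by
  intro p q hpq
  rw [Matrix.mul_apply]
  apply Finset.sum_eq_zero
  intro r _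
  by_cases hr : p.1 < r.1
  · rw [hM p r hr, zero_mul]
  · rw [hN r q (lt_of_le_of_lt (not_lt.mp hr) hpq), mul_zero]

lemma IsBLT.add {T a b : ℕ} {M N : Matrix (Fin (T+1) × Fin a) (Fin (T+1) × Fin b) ℝ}
    (hM : IsBLT M) (hN : IsBLT N) : IsBLT (M + N) := by
  intro p q hpq
  simp [Matrix.add_apply, hM p q hpq, hN p q hpq]

lemma dshift_mul_strict {T n b : ℕ} {M : Matrix (Fin (T+1) × Fin n) (Fin (T+1) × Fin b) ℝ}
    (hM : IsBLT M) : IsStrictBLT (dshift n T * M) := by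
  intro p q hpq
  rw [Matrix.mul_apply]
  apply Finset.sum_eq_zero
  intro r _
  by_cases hr : (p.1 : ℕ) = (r.1 : ℕ) + 1 ∧ p.2 = r.2
  · rw [hM r q (by rw [Fin.lt_def]; rw [Fin.le_def] at hpq; omega), mul_zero]
  · simp [dshift, hr]

lemma strictBLT_pow {T a : ℕ} {M : Matrix (Fin (T+1) × Fin a) (Fin (T+1) × Fin a) ℝ}
    (h : IsStrictBLT M) : ∀ k p q, (p.1 : ℕ) < (q.1 : ℕ) + k → (M ^ k) p q = 0 := by
  intro k
  induction k with
  | zero =>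
    intro pp q hpq
    rw [pow_zero]
    exact Matrix.one_apply_ne (by rintro rfl; omega)
  | succ k ih =>
    intro pp q hpq
    rw [pow_succ', Matrix.mul_apply]
    apply Finset.sum_eq_zero
    intro r _
    by_cases hr : pp.1 ≤ r.1
    · rw [h pp r hr, zero_mul]
    · rw [ih r q (by rw [Fin.le_def, not_le] at hr; omega), mul_zero]

lemma IsStrictBLT.nilpotent {T a : ℕ} {M : Matrix (Fin (T+1) × Fin a) (Fin (T+1) × Fin a) ℝ}
    (h : IsStrictBLT M) : M ^ (T + 1) = 0 := by
  ext p q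
  exact strictBLT_pow h (T + 1) p q (by have := p.1.isLt; omega)


set_option maxHeartbeats 1000000 in
theorem stmt8 {T n m p : ℕ}
    (A : Matrix (Fin (T+1) × Fin n) (Fin (T+1) × Fin n) ℝ)
    (B : Matrix (Fin (T+1) × Fin n) (Fin (T+1) × Fin p) ℝ)
    (C : Matrix (Fin (T+1) × Fin m) (Fin (T+1) × Fin n) ℝ)
    (K : Matrix (Fin (T+1) × Fin p) (Fin (T+1) × Fin m) ℝ)
    (hA : IsBD A) (hB : IsBD B) (hC : IsBD C) (hK : IsBLT K)
    (Φxx : Matrix (Fin (T+1) × Fin n) (Fin (T+1) × Fin n) ℝ)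
    (Φxy : Matrix (Fin (T+1) × Fin n) (Fin (T+1) × Fin m) ℝ)
    (Φux : Matrix (Fin (T+1) × Fin p) (Fin (T+1) × Fin n) ℝ)
    (Φuy : Matrix (Fin (T+1) × Fin p) (Fin (T+1) × Fin m) ℝ)
    (hΦxx : Φxx = (1 - dshift n T * (A + B * K * C))⁻¹)
    (hΦxy : Φxy = Φxx * dshift n T * B * K)
    (hΦux : Φux = K * C * Φxx)
    (hΦuy : Φuy = K + K * C * Φxx * dshift n T * B * K) :
    ((1 - dshift n T * A) * Φxx - dshift n T * B * Φux = 1 ∧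
      (1 - dshift n T * A) * Φxy - dshift n T * B * Φuy = 0) ∧
    (Φxx * (1 - dshift n T * A) - Φxy * C = 1 ∧
      Φux * (1 - dshift n T * A) - Φuy * C = 0) := by
  set Z := dshift n T with hZ
  set M := 1 - Z * (A + B * K * C) with hM
  have hSBLT : IsBLT (A + B * K * C) :=
    hA.isBLT.add ((hB.isBLT.mul hK).mul hC.isBLT)
  have hnil : IsNilpotent (Z * (A + B * K * C)) :=
    ⟨T + 1, (dshift_mul_strict hSBLT).nilpotent⟩
  have hU : IsUnit M := by rw [hM]; exact hnil.isUnit_one_sub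
  have hdet : IsUnit M.det := (Matrix.isUnit_iff_isUnit_det M).mp hU
  have h1 : M * Φxx = 1 := by rw [hΦxx]; exact Matrix.mul_nonsing_inv M hdet
  have h2 : Φxx * M = 1 := by rw [hΦxx]; exact Matrix.nonsing_inv_mul M hdet
  rw [hM] at h1 h2
  have e1 : (1 - Z * A) * Φxx - Z * B * (K * C * Φxx) = 1 := by
    calc (1 - Z * A) * Φxx - Z * B * (K * C * Φxx)
        = (1 - Z * (A + B * K * C)) * Φxx := by
          simp only [Matrix.sub_mul, Matrix.mul_sub, Matrix.add_mul, Matrix.mul_add,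
            Matrix.mul_assoc, Matrix.one_mul, Matrix.mul_one]
          abel
      _ = 1 := h1
  have e2 : Φxx * (1 - Z * A) - Φxx * Z * B * K * C = 1 := by
    calc Φxx * (1 - Z * A) - Φxx * Z * B * K * C
        = Φxx * (1 - Z * (A + B * K * C)) := by
          simp only [Matrix.sub_mul, Matrix.mul_sub, Matrix.add_mul, Matrix.mul_add,
            Matrix.mul_assoc, Matrix.one_mul, Matrix.mul_one]
          abel
      _ = 1 := h2
  refine ⟨⟨?_, ?_⟩, ?_, ?_⟩
  · rw [hΦux]; exact e1
  · rw [hΦxy, hΦuy]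
    calc (1 - Z * A) * (Φxx * Z * B * K) - Z * B * (K + K * C * Φxx * Z * B * K)
        = ((1 - Z * A) * Φxx - Z * B * (K * C * Φxx)) * (Z * B * K) - Z * B * K := by
          simp only [Matrix.sub_mul, Matrix.mul_sub, Matrix.add_mul, Matrix.mul_add,
            Matrix.mul_assoc, Matrix.one_mul, Matrix.mul_one]
          abel
      _ = 0 := by rw [e1, Matrix.one_mul, sub_self]
  · rw [hΦxy]; exact e2
  · rw [hΦux, hΦuy]
    calc K * C * Φxx * (1 - Z * A) - (K + K * C * Φxx * Z * B * K) * C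
        = K * C * (Φxx * (1 - Z * A) - Φxx * Z * B * K * C) - K * C := by
          simp only [Matrix.sub_mul, Matrix.mul_sub, Matrix.add_mul, Matrix.mul_add,
            Matrix.mul_assoc, Matrix.one_mul, Matrix.mul_one]
          abel
      _ = 0 := by rw [e2, Matrix.mul_one, sub_self]
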